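/- Write n in binary as n = Σ_{m≥0} b_m 2^m, and define q(n) = Σ_{m : m mod 6 ∈ {0,1,3,4}} b_m 2^m (i.e., q(n) is n with bits in positions ≡ 2, 5 (mod 6) set to zero). Then M₂(n) = t(q(n)) for all n ≥ 0, where t is the Thue–Morse sequence. -/

import Mathlib

/-- The defining recurrences of the sequence `M₂` (values in `{0,1}`). -/
def IsM2 (M : ℕ → ℕ) : Prop :=
  (∀ n, M n ≤ 1) ∧ M 0 = 0 ∧ M 1 = 1 ∧
    (∀ n, 1 ≤ n → M (4 * n) = M (2 * n + M n)) ∧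
    (∀ n, 1 ≤ n → M (4 * n + 1) = 1 - M (4 * n)) ∧
    (∀ n, M (4 * n + 2) = M (2 * n + 1 - M n)) ∧
    (∀ n, M (4 * n + 3) = 1 - M (4 * n + 2))

/-- The bit-mask operator: `q n` is `n` with the binary digits in positions
`≡ 2, 5 (mod 6)` set to zero (only positions `m ≡ 0,1,3,4 (mod 6)` are kept). -/
def qMask (n : ℕ) : ℕ :=
  ∑ m ∈ Finset.range (n + 1),
    if m % 6 = 0 ∨ m % 6 = 1 ∨ m % 6 = 3 ∨ m % 6 = 4 then n / 2 ^ m % 2 * 2 ^ m else 0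

/-!
Let `a k n` be the parity of the bits of `n` in the positions `m` with `k + m ≢ 2 (mod 3)`.
Since the Thue–Morse value is the parity of the binary digit sum, `t (q n) = a 0 n`.
The kept pattern `1, 1, 0` satisfies `κ (k + 1) ≡ κ k + κ (k + 2) (mod 2)`, so
`a 1 ≡ a 0 + a 2`. Reading off the two lowest bits, `a 0 (4n + r)` is `a 2 n` flipped by the
number of ones in `r`, while by that identity `a 0 (2n + a 0 n) = a 2 n` and
`a 0 (2n + 1 - a 0 n) = 1 - a 2 n`. Hence `a 0` satisfies the recurrences of `M₂`, and these
determine a sequence uniquely.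
-/

-- The positions `≡ 2, 5 (mod 6)` cleared by `qMask` are exactly those `≡ 2 (mod 3)`.
def keepBit (k : ℕ) : ℕ := if k % 3 = 2 then 0 else 1

def qMaskFrom (k : ℕ) : ℕ → ℕ
  | 0 => 0
  | n + 1 => 2 * qMaskFrom (k + 1) ((n + 1) / 2) + keepBit k * ((n + 1) % 2)

def qMaskParity (k : ℕ) : ℕ → ℕ
  | 0 => 0
  | n + 1 => (keepBit k * ((n + 1) % 2) + qMaskParity (k + 1) ((n + 1) / 2)) % 2

lemma keepBit_le_one (k : ℕ) : keepBit k ≤ 1 := by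
  unfold keepBit; split <;> omega

lemma keepBit_succ (k : ℕ) : keepBit (k + 1) = (keepBit k + keepBit (k + 2)) % 2 := by
  unfold keepBit; split_ifs <;> omega

lemma qMaskFrom_zero (k : ℕ) : qMaskFrom k 0 = 0 := by
  rw [qMaskFrom]

lemma qMaskFrom_two_mul_add_bit (k n b : ℕ) (hb : b ≤ 1) :
    qMaskFrom k (2 * n + b) = 2 * qMaskFrom (k + 1) n + keepBit k * b := by
  rcases Nat.eq_zero_or_pos (2 * n + b) with h | h
  · obtain ⟨rfl, rfl⟩ : n = 0 ∧ b = 0 := by omega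
    simp [qMaskFrom_zero]
  obtain ⟨m, hm⟩ : ∃ m, 2 * n + b = m + 1 := ⟨2 * n + b - 1, by omega⟩
  rw [hm, qMaskFrom, ← hm, show (2 * n + b) % 2 = b by omega, show (2 * n + b) / 2 = n by omega]

lemma qMaskFrom_eq_sum (k j n : ℕ) (hn : n < 2 ^ j) :
    qMaskFrom k n = ∑ m ∈ Finset.range j, keepBit (k + m) * (n / 2 ^ m % 2) * 2 ^ m := by
  induction j generalizing k n with
  | zero => simp_all [qMaskFrom_zero]
  | succ j ih =>
    rw [← Nat.div_add_mod n 2, qMaskFrom_two_mul_add_bit k _ _ (by omega), Nat.div_add_mod,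
      ih (k + 1) (n / 2) (by omega), Finset.sum_range_succ', Finset.mul_sum]
    simp only [pow_succ', ← Nat.div_div_eq_div_mul, add_assoc, add_comm 1, pow_zero, Nat.div_one,
      add_zero, mul_one]
    exact congrArg (· + _) (Finset.sum_congr rfl fun m _ => by ring)

lemma qMask_eq_qMaskFrom_zero (n : ℕ) : qMask n = qMaskFrom 0 n := by
  rw [qMask, qMaskFrom_eq_sum 0 (n + 1) n
    (Nat.lt_two_pow_self.trans (Nat.pow_lt_pow_succ one_lt_two))]
  refine Finset.sum_congr rfl fun m _ => ?_
  unfold keepBit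
  split_ifs <;> first | omega | simp

lemma qMaskParity_le_one (k n : ℕ) : qMaskParity k n ≤ 1 := by
  cases n <;> rw [qMaskParity] <;> omega

lemma qMaskParity_two_mul_add_bit (k n b : ℕ) (hb : b ≤ 1) :
    qMaskParity k (2 * n + b) = (keepBit k * b + qMaskParity (k + 1) n) % 2 := by
  rcases Nat.eq_zero_or_pos (2 * n + b) with h | h
  · obtain ⟨rfl, rfl⟩ : n = 0 ∧ b = 0 := by omega
    simp [qMaskParity]
  obtain ⟨m, hm⟩ : ∃ m, 2 * n + b = m + 1 := ⟨2 * n + b - 1, by omega⟩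
  rw [hm, qMaskParity, ← hm, show (2 * n + b) % 2 = b by omega,
    show (2 * n + b) / 2 = n by omega]

lemma qMaskParity_succ (k n : ℕ) :
    qMaskParity (k + 1) n = (qMaskParity k n + qMaskParity (k + 2) n) % 2 := by
  induction n using Nat.strong_induction_on generalizing k with
  | _ n ih =>
    rcases Nat.eq_zero_or_pos n with rfl | hpos
    · simp [qMaskParity]
    obtain ⟨m, b, hb, rfl⟩ : ∃ m b, b ≤ 1 ∧ n = 2 * m + b := ⟨n / 2, n % 2, by omega, by omega⟩
    have ih' : qMaskParity (k + 2) m = (qMaskParity (k + 1) m + qMaskParity (k + 3) m) % 2 :=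
      ih m (by omega) (k + 1)
    simp only [qMaskParity_two_mul_add_bit _ _ _ hb, add_assoc, Nat.reduceAdd]
    have := keepBit_succ k
    have := keepBit_le_one k
    have := keepBit_le_one (k + 2)
    interval_cases b <;> omega

theorem isM2_qMaskParity : IsM2 (qMaskParity 0) := by
  have low (n b : ℕ) (hb : b ≤ 1) :
      qMaskParity 0 (2 * n + b) = (b + qMaskParity 1 n) % 2 := by
    simpa [keepBit] using qMaskParity_two_mul_add_bit 0 n b hb
  have quarter (n b : ℕ) (hb : b < 4) :
      qMaskParity 0 (4 * n + b) = (b / 2 + b % 2 + qMaskParity 2 n) % 2 := by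
    have h1 : qMaskParity 1 (2 * n + b / 2) = (b / 2 + qMaskParity 2 n) % 2 := by
      simpa [keepBit] using qMaskParity_two_mul_add_bit 1 n (b / 2) (by omega)
    rw [show 4 * n + b = 2 * (2 * n + b / 2) + b % 2 by omega, low _ _ (by omega), h1]
    omega
  have shift (n : ℕ) : qMaskParity 1 n = (qMaskParity 0 n + qMaskParity 2 n) % 2 :=
    qMaskParity_succ 0 n
  have le := qMaskParity_le_one
  refine ⟨le 0, by simp [qMaskParity], by simpa [qMaskParity] using low 0 1 le_rfl,
    fun n _ => ?_, fun n _ => ?_, fun n => ?_, fun n => ?_⟩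
  · rw [low n _ (le 0 n), shift n, ← add_zero (4 * n), quarter n 0 (by norm_num)]
    have := le 0 n; omega
  · rw [quarter n 1 (by norm_num), ← add_zero (4 * n), quarter n 0 (by norm_num)]
    have := le 2 n; omega
  · have := le 0 n
    rw [show 2 * n + 1 - qMaskParity 0 n = 2 * n + (1 - qMaskParity 0 n) by omega,
      low n _ (by omega), shift n, quarter n 2 (by norm_num)]
    omega
  · rw [quarter n 3 (by norm_num), quarter n 2 (by norm_num)]
    have := le 2 n; omega

theorem IsM2.unique {M M' : ℕ → ℕ} (hM : IsM2 M) (hM' : IsM2 M') : M = M' := by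
  obtain ⟨-, h0, h1, h4, h41, h42, h43⟩ := hM
  obtain ⟨hle', h0', h1', h4', h41', h42', h43'⟩ := hM'
  funext n
  induction n using Nat.strong_induction_on with
  | _ n ih =>
    obtain ⟨m, r, hr, rfl⟩ : ∃ m r, r < 4 ∧ n = 4 * m + r := ⟨n / 4, n % 4, by omega, by omega⟩
    have := hle' m
    interval_cases r
    · rcases Nat.eq_zero_or_pos m with rfl | hm
      · rw [h0, h0']
      rw [add_zero, h4 m hm, h4' m hm, ih m (by omega)]
      exact ih _ (by omega)
    · rcases Nat.eq_zero_or_pos m with rfl | hm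
      · rw [h1, h1']
      rw [h41 m hm, h41' m hm, ih (4 * m) (by omega)]
    · rw [h42, h42', ih m (by omega)]
      exact ih _ (by omega)
    · rw [h43, h43', ih (4 * m + 2) (by omega)]

lemma thueMorse_le_one (t : ℕ → ℕ) (ht0 : t 0 = 0) (hte : ∀ n, t (2 * n) = t n)
    (hto : ∀ n, t (2 * n + 1) = 1 - t n) (n : ℕ) : t n ≤ 1 := by
  induction n using Nat.strong_induction_on with
  | _ n ih =>
    rcases Nat.eq_zero_or_pos n with rfl | hpos
    · simp [ht0]
    rcases Nat.even_or_odd' n with ⟨m, rfl | rfl⟩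
    · rw [hte]; exact ih m (by omega)
    · rw [hto]; omega

lemma thueMorse_two_mul_add_bit (t : ℕ → ℕ) (ht0 : t 0 = 0) (hte : ∀ n, t (2 * n) = t n)
    (hto : ∀ n, t (2 * n + 1) = 1 - t n) (n b : ℕ) (hb : b ≤ 1) :
    t (2 * n + b) = (b + t n) % 2 := by
  have := thueMorse_le_one t ht0 hte hto n
  interval_cases b
  · rw [add_zero, hte]; omega
  · rw [hto]; omega

lemma thueMorse_qMaskFrom (t : ℕ → ℕ) (ht0 : t 0 = 0) (hte : ∀ n, t (2 * n) = t n)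
    (hto : ∀ n, t (2 * n + 1) = 1 - t n) (k n : ℕ) : t (qMaskFrom k n) = qMaskParity k n := by
  induction n using Nat.strong_induction_on generalizing k with
  | _ n ih =>
    rcases Nat.eq_zero_or_pos n with rfl | hpos
    · simp [qMaskFrom_zero, qMaskParity, ht0]
    obtain ⟨m, b, hb, rfl⟩ : ∃ m b, b ≤ 1 ∧ n = 2 * m + b := ⟨n / 2, n % 2, by omega, by omega⟩
    rw [qMaskFrom_two_mul_add_bit _ _ _ hb, qMaskParity_two_mul_add_bit _ _ _ hb,
      thueMorse_two_mul_add_bit t ht0 hte hto _ _ (mul_le_one' (keepBit_le_one k) hb),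
      ih m (by omega)]

/-- `M₂(n) = t(q(n))` for all `n ≥ 0`, where `t` is the Thue–Morse
sequence. -/
theorem M2_eq_thueMorse_qMask (M t : ℕ → ℕ) (hM : IsM2 M)
    (ht0 : t 0 = 0) (hte : ∀ n, t (2 * n) = t n) (hto : ∀ n, t (2 * n + 1) = 1 - t n) :
    ∀ n, M n = t (qMask n) := by
  intro n
  rw [qMask_eq_qMaskFrom_zero, thueMorse_qMaskFrom t ht0 hte hto, hM.unique isM2_qMaskParity]
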